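/- Consider homogeneous polynomials p_v(x) of degree 2d, one per node v of a strongly connected automaton G, each strictly positive on ℝ^n∖{0}, such that γ^{2d} p_u(x) − p_v(A_σ x) ≥ 0 for every arc (u,v,σ) and all x. Then the constrained joint spectral radius of the labelled matrices satisfies ρ(G,𝒜) ≤ γ. -/

import Mathlib

/-!
Each `p v` is a positive definite form of degree `2d`, so `f v = (p v) ^ (1 / 2d)` is continuous,
positively homogeneous of degree one and positive off the origin. Compactness of the unit sphere
makes it comparable to the norm, `c ‖x‖ ≤ f v x ≤ C ‖x‖`, and the certificate becomes
`f v (A σ x) ≤ γ f u x` along every arc. Iterating along an admissible word of length `k` gives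
`‖A_s‖ ≤ (C / c) γ ^ k`, whose `k`-th root tends to `γ`.
-/

open Matrix

attribute [local instance] Matrix.linftyOpNormedAddCommGroup Matrix.linftyOpNormedRing

open Filter Topology

lemma Real.pow_mul_rpow_inv_natCast {t a : ℝ} (ht : 0 ≤ t) (ha : 0 ≤ a) {N : ℕ} (hN : N ≠ 0) :
    (t ^ N * a) ^ (N⁻¹ : ℝ) = t * a ^ (N⁻¹ : ℝ) := by
  rw [Real.mul_rpow (pow_nonneg ht N) ha, Real.pow_rpow_inv_natCast ht hN]

namespace MvPolynomial

variable {σ : Type*} {N : ℕ}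

theorem IsHomogeneous.eval_smul {R : Type*} [CommSemiring R] {φ : MvPolynomial σ R}
    (hφ : φ.IsHomogeneous N) (r : R) (x : σ → R) :
    eval (r • x) φ = r ^ N * eval x φ := by
  simp only [eval_eq, Finset.mul_sum]
  refine Finset.sum_congr rfl fun e he => ?_
  simp only [Pi.smul_apply, smul_eq_mul, mul_pow, Finset.prod_mul_distrib,
    Finset.prod_pow_eq_pow_sum, ← hφ.degree_eq_sum_deg_support he]
  ring

theorem IsHomogeneous.eval_nonneg {φ : MvPolynomial σ ℝ} (hφ : φ.IsHomogeneous N) (hN : N ≠ 0)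
    (hpos : ∀ x, x ≠ 0 → 0 < eval x φ) (x : σ → ℝ) : 0 ≤ eval x φ := by
  rcases eq_or_ne x 0 with rfl | hx
  · have := hφ.eval_smul 0 0
    simp only [smul_zero, zero_pow hN, zero_mul] at this
    exact this.ge
  · exact (hpos x hx).le

noncomputable def evalRoot (φ : MvPolynomial σ ℝ) (N : ℕ) (x : σ → ℝ) : ℝ :=
  eval x φ ^ (N⁻¹ : ℝ)

theorem continuous_evalRoot (φ : MvPolynomial σ ℝ) (N : ℕ) : Continuous (evalRoot φ N) :=
  φ.continuous_eval.rpow_const fun _ => Or.inr (by positivity)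

theorem evalRoot_pos {φ : MvPolynomial σ ℝ} (hpos : ∀ x, x ≠ 0 → 0 < eval x φ) {x : σ → ℝ}
    (hx : x ≠ 0) : 0 < evalRoot φ N x :=
  Real.rpow_pos_of_pos (hpos x hx) _

theorem IsHomogeneous.evalRoot_smul {φ : MvPolynomial σ ℝ} (hφ : φ.IsHomogeneous N) (hN : N ≠ 0)
    (hpos : ∀ x, x ≠ 0 → 0 < eval x φ) {t : ℝ} (ht : 0 ≤ t) (x : σ → ℝ) :
    evalRoot φ N (t • x) = t * evalRoot φ N x := by
  rw [evalRoot, hφ.eval_smul, Real.pow_mul_rpow_inv_natCast ht (hφ.eval_nonneg hN hpos x) hN,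
    evalRoot]

theorem evalRoot_le_mul_evalRoot {φ ψ : MvPolynomial σ ℝ} {x y : σ → ℝ} {γ : ℝ} (hγ : 0 ≤ γ)
    (hN : N ≠ 0) (hy : 0 ≤ eval y ψ) (hx : 0 ≤ eval x φ) (h : eval y ψ ≤ γ ^ N * eval x φ) :
    evalRoot ψ N y ≤ γ * evalRoot φ N x := by
  rw [evalRoot, evalRoot, ← Real.pow_mul_rpow_inv_natCast hγ hx hN]
  exact Real.rpow_le_rpow hy h (by positivity)

end MvPolynomial

section Homogeneous

variable {E : Type*} [NormedAddCommGroup E] [NormedSpace ℝ E] {f : E → ℝ}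

theorem apply_eq_norm_mul_apply_normalize (hf : ∀ t : ℝ, 0 ≤ t → ∀ x, f (t • x) = t * f x)
    (x : E) : f x = ‖x‖ * f (‖x‖⁻¹ • x) := by
  rcases eq_or_ne x 0 with rfl | hx
  · simpa using hf 0 le_rfl 0
  · rw [← hf _ (norm_nonneg x), smul_smul, mul_inv_cancel₀ (norm_ne_zero_iff.mpr hx), one_smul]

theorem normalize_mem_sphere {x : E} (hx : x ≠ 0) : ‖x‖⁻¹ • x ∈ Metric.sphere (0 : E) 1 :=
  mem_sphere_zero_iff_norm.mpr (norm_smul_inv_norm (𝕜 := ℝ) hx)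

variable [ProperSpace E]

theorem exists_pos_mul_norm_le_of_homogeneous (hf : Continuous f)
    (hsmul : ∀ t : ℝ, 0 ≤ t → ∀ x, f (t • x) = t * f x) (hpos : ∀ x, x ≠ 0 → 0 < f x) :
    ∃ c, 0 < c ∧ ∀ x, c * ‖x‖ ≤ f x := by
  obtain ⟨c, hc, hcf⟩ := (isCompact_sphere (0 : E) 1).exists_forall_le' hf.continuousOn
    fun u hu => hpos u (ne_zero_of_mem_unit_sphere ⟨u, hu⟩)
  refine ⟨c, hc, fun x => ?_⟩
  rw [apply_eq_norm_mul_apply_normalize hsmul x, mul_comm]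
  rcases eq_or_ne x 0 with rfl | hx
  · simp
  · exact mul_le_mul_of_nonneg_left (hcf _ (normalize_mem_sphere hx)) (norm_nonneg x)

theorem exists_le_mul_norm_of_homogeneous (hf : Continuous f)
    (hsmul : ∀ t : ℝ, 0 ≤ t → ∀ x, f (t • x) = t * f x) :
    ∃ C, 0 ≤ C ∧ ∀ x, f x ≤ C * ‖x‖ := by
  obtain ⟨C, hC⟩ := (isCompact_sphere (0 : E) 1).exists_bound_of_continuousOn hf.continuousOn
  refine ⟨max C 0, le_max_right C 0, fun x => ?_⟩
  rw [apply_eq_norm_mul_apply_normalize hsmul x, mul_comm]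
  rcases eq_or_ne x 0 with rfl | hx
  · simp
  · refine mul_le_mul_of_nonneg_right ?_ (norm_nonneg x)
    exact (le_abs_self _).trans <| (hC _ (normalize_mem_sphere hx)).trans (le_max_left C 0)

end Homogeneous

section Words

variable {m : ℕ} {V : Type*} (E : Set (V × V × Fin m))

def IsAdmissible {k : ℕ} (σ : Fin k → Fin m) (vs : Fin (k + 1) → V) : Prop :=
  ∀ i : Fin k, (vs i.castSucc, vs i.succ, σ i) ∈ E

/-- `A (σ (k - 1)) * ⋯ * A (σ 0)`: the first letter acts first. -/
def wordProd {M : Type*} [Monoid M] (A : Fin m → M) {k : ℕ} (σ : Fin k → Fin m) : M :=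
  ((List.ofFn fun i => A (σ i)).reverse).prod

variable {E}

theorem IsAdmissible.tail {k : ℕ} {σ : Fin (k + 1) → Fin m} {vs : Fin (k + 2) → V}
    (h : IsAdmissible E σ vs) : IsAdmissible E (Fin.tail σ) (Fin.tail vs) := fun i => by
  simpa only [Fin.tail, Fin.succ_castSucc] using h i.succ

theorem wordProd_succ {M : Type*} [Monoid M] (A : Fin m → M) {k : ℕ} (σ : Fin (k + 1) → Fin m) :
    wordProd A σ = wordProd A (Fin.tail σ) * A (σ 0) := by
  rw [wordProd, List.ofFn_succ, List.reverse_cons, List.prod_append, List.prod_singleton]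
  rfl

variable {ι R : Type*} [Fintype ι] [DecidableEq ι] [Semiring R] {A : Fin m → Matrix ι ι R}

theorem apply_wordProd_mulVec_le {f : V → (ι → R) → ℝ} {γ : ℝ} (hγ : 0 ≤ γ)
    (hf : ∀ u v a, (u, v, a) ∈ E → ∀ x, f v (A a *ᵥ x) ≤ γ * f u x) :
    ∀ {k : ℕ} (σ : Fin k → Fin m) (vs : Fin (k + 1) → V), IsAdmissible E σ vs →
      ∀ x, f (vs (Fin.last k)) (wordProd A σ *ᵥ x) ≤ γ ^ k * f (vs 0) x
  | 0, σ, vs, _, x => by simp [wordProd, Fin.last]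
  | k + 1, σ, vs, hadm, x => by
    rw [wordProd_succ, ← mulVec_mulVec, ← Fin.succ_last, pow_succ, mul_assoc]
    calc f (Fin.tail vs (Fin.last k)) (wordProd A (Fin.tail σ) *ᵥ (A (σ 0) *ᵥ x))
        ≤ γ ^ k * f (Fin.tail vs 0) (A (σ 0) *ᵥ x) :=
          apply_wordProd_mulVec_le hγ hf _ _ hadm.tail _
      _ ≤ γ ^ k * (γ * f (vs 0) x) :=
          mul_le_mul_of_nonneg_left (hf _ _ _ (hadm 0) x) (pow_nonneg hγ k)

theorem norm_wordProd_le {n : ℕ} {A : Fin m → Matrix (Fin n) (Fin n) ℝ}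
    {f : V → (Fin n → ℝ) → ℝ} {γ : ℝ} (hγ : 0 ≤ γ)
    (hf : ∀ u v a, (u, v, a) ∈ E → ∀ x, f v (A a *ᵥ x) ≤ γ * f u x)
    {c C : V → ℝ} (hc : ∀ v, 0 < c v) (hC : ∀ v, 0 ≤ C v)
    (hlow : ∀ v x, c v * ‖x‖ ≤ f v x) (hup : ∀ v x, f v x ≤ C v * ‖x‖)
    {k : ℕ} {σ : Fin k → Fin m} {vs : Fin (k + 1) → V} (hadm : IsAdmissible E σ vs) :
    ‖wordProd A σ‖ ≤ C (vs 0) / c (vs (Fin.last k)) * γ ^ k := by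
  rw [linfty_opNorm_eq_opNorm]
  refine ContinuousLinearMap.opNorm_le_bound _
    (mul_nonneg (div_nonneg (hC _) (hc _).le) (pow_nonneg hγ k)) fun x => ?_
  rw [div_mul_eq_mul_div, div_mul_eq_mul_div, le_div_iff₀' (hc _)]
  calc c (vs (Fin.last k)) * ‖wordProd A σ *ᵥ x‖
      ≤ γ ^ k * f (vs 0) x := (hlow _ _).trans (apply_wordProd_mulVec_le hγ hf σ vs hadm x)
    _ ≤ γ ^ k * (C (vs 0) * ‖x‖) := mul_le_mul_of_nonneg_left (hup _ x) (pow_nonneg hγ k)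
    _ = C (vs 0) * γ ^ k * ‖x‖ := by ring

theorem le_of_tendsto_sSup_of_norm_wordProd_le {M : Type*} [Monoid M] [SeminormedAddCommGroup M]
    {A : Fin m → M} {K γ L : ℝ} (hγ : 0 ≤ γ)
    (hK : ∀ k (σ : Fin k → Fin m) vs, IsAdmissible E σ vs → ‖wordProd A σ‖ ≤ K * γ ^ k)
    (hL : Tendsto (fun k : ℕ => sSup {r : ℝ | ∃ (σ : Fin k → Fin m) (vs : Fin (k + 1) → V),
      IsAdmissible E σ vs ∧ r = ‖wordProd A σ‖ ^ (1 / (k : ℝ))}) atTop (𝓝 L)) :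
    L ≤ γ := by
  -- `K` itself may be `≤ 0`, and then `K ^ (1 / k)` does not tend to `1`.
  set B := max K 1
  have hB : 0 < B := lt_max_of_lt_right one_pos
  have hlim : Tendsto (fun k : ℕ => B ^ (1 / (k : ℝ)) * γ) atTop (𝓝 γ) := by
    simpa using (tendsto_const_nhds.rpow tendsto_one_div_atTop_nhds_zero_nat
      (Or.inl hB.ne')).mul_const γ
  refine le_of_tendsto_of_tendsto hL hlim (eventually_ne_atTop 0 |>.mono fun k hk => ?_)
  refine Real.sSup_le (fun r ⟨σ, vs, hadm, hr⟩ => ?_) (by positivity)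
  have hP : ‖wordProd A σ‖ ≤ B * γ ^ k :=
    (hK k σ vs hadm).trans (mul_le_mul_of_nonneg_right (le_max_left K 1) (pow_nonneg hγ k))
  calc r ≤ (B * γ ^ k) ^ (1 / (k : ℝ)) :=
        hr ▸ Real.rpow_le_rpow (norm_nonneg _) hP (by positivity)
    _ = B ^ (1 / (k : ℝ)) * γ := by
      rw [Real.mul_rpow hB.le (by positivity), ← Real.rpow_natCast, ← Real.rpow_mul hγ,
        mul_one_div_cancel (Nat.cast_ne_zero.mpr hk), Real.rpow_one]

end Words

theorem cjsr_polynomial_lyapunov_general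
    (n m d : ℕ) (hd : 0 < d)
    {V : Type*} [Fintype V]
    (E : Set (V × V × Fin m))
    (A : Fin m → Matrix (Fin n) (Fin n) ℝ)
    (p : V → MvPolynomial (Fin n) ℝ)
    (hhom : ∀ v, (p v).IsHomogeneous (2 * d))
    (hpos : ∀ v (x : Fin n → ℝ), x ≠ 0 → 0 < MvPolynomial.eval x (p v))
    (γ : ℝ) (hγ : 0 ≤ γ)
    (hlyap : ∀ u v σ, (u, v, σ) ∈ E → ∀ x : Fin n → ℝ,
      MvPolynomial.eval ((A σ).mulVec x) (p v) ≤ γ ^ (2 * d) * MvPolynomial.eval x (p u)) :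
    ∀ L : ℝ,
      Filter.Tendsto (fun k : ℕ =>
          sSup {r : ℝ | ∃ (σ : Fin k → Fin m) (vs : Fin (k + 1) → V),
            (∀ i : Fin k, (vs i.castSucc, vs i.succ, σ i) ∈ E) ∧
            r = ‖((List.ofFn fun i => A (σ i)).reverse).prod‖ ^ (1 / (k : ℝ))})
        Filter.atTop (nhds L) → L ≤ γ := by
  intro L hL
  have hN : 2 * d ≠ 0 := by positivity
  have hsmul v (t : ℝ) (ht : 0 ≤ t) x := (hhom v).evalRoot_smul hN (hpos v) ht x
  choose c hc hlow using fun v => exists_pos_mul_norm_le_of_homogeneous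
    (MvPolynomial.continuous_evalRoot (p v) _) (hsmul v)
    fun _ hx => MvPolynomial.evalRoot_pos (hpos v) hx
  choose C hC hup using fun v => exists_le_mul_norm_of_homogeneous
    (MvPolynomial.continuous_evalRoot (p v) _) (hsmul v)
  have hf u v a (h : (u, v, a) ∈ E) x :=
    MvPolynomial.evalRoot_le_mul_evalRoot hγ hN ((hhom v).eval_nonneg hN (hpos v) _)
      ((hhom u).eval_nonneg hN (hpos u) x) (hlyap u v a h x)
  obtain ⟨K, hK⟩ := (Set.finite_range fun uv : V × V => C uv.1 / c uv.2).bddAbove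
  refine le_of_tendsto_sSup_of_norm_wordProd_le (K := K) hγ (fun k σ vs hadm => ?_) hL
  exact (norm_wordProd_le hγ hf hc hC hlow hup hadm).trans
    (mul_le_mul_of_nonneg_right (hK ⟨(vs 0, vs (Fin.last k)), rfl⟩) (pow_nonneg hγ k))

/-- **SOS-type polynomial Lyapunov certificate for the CJSR.** Given a strongly
connected automaton with arcs `E ⊆ V × V × [m]` labelled by matrices `A σ`, and
homogeneous degree-`2d` polynomials `p v`, strictly positive on `ℝⁿ ∖ {0}`, with
`p v (A σ x) ≤ γ^{2d} p u (x)` for every arc `(u, v, σ)` and all `x`, the constrained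
joint spectral radius `lim_k max_{s admissible, |s| = k} ‖A_s‖^{1/k}` is at most `γ`. -/
theorem cjsr_polynomial_lyapunov
    (n m d : ℕ) (hn : 0 < n) (hd : 0 < d)
    {V : Type*} [Fintype V] [Nonempty V]
    (E : Set (V × V × Fin m))
    (A : Fin m → Matrix (Fin n) (Fin n) ℝ)
    (hconn : ∀ u w : V, ∃ (k : ℕ) (_ : 0 < k) (vs : Fin (k + 1) → V) (σ : Fin k → Fin m),
      vs 0 = u ∧ vs (Fin.last k) = w ∧ ∀ i : Fin k, (vs i.castSucc, vs i.succ, σ i) ∈ E)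
    (p : V → MvPolynomial (Fin n) ℝ)
    (hhom : ∀ v, (p v).IsHomogeneous (2 * d))
    (hpos : ∀ v (x : Fin n → ℝ), x ≠ 0 → 0 < MvPolynomial.eval x (p v))
    (γ : ℝ) (hγ : 0 ≤ γ)
    (hlyap : ∀ u v σ, (u, v, σ) ∈ E → ∀ x : Fin n → ℝ,
      MvPolynomial.eval ((A σ).mulVec x) (p v) ≤ γ ^ (2 * d) * MvPolynomial.eval x (p u)) :
    ∀ L : ℝ,
      Filter.Tendsto (fun k : ℕ =>
          sSup {r : ℝ | ∃ (σ : Fin k → Fin m) (vs : Fin (k + 1) → V),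
            (∀ i : Fin k, (vs i.castSucc, vs i.succ, σ i) ∈ E) ∧
            r = ‖((List.ofFn fun i => A (σ i)).reverse).prod‖ ^ (1 / (k : ℝ))})
        Filter.atTop (nhds L) → L ≤ γ :=
  cjsr_polynomial_lyapunov_general n m d hd E A p hhom hpos γ hγ hlyap
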